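/- arXiv:1705.08159 — 5 statements merged into one kernel-verified Lean document; each statement's English description precedes it below -/
import Mathlib

section
/- Let (K,v) be a Henselian valued field with valuation ring R, residue field k of characteristic not dividing d!. Let φ = ⟨a₁,...,aₙ⟩ be a diagonal unit form of degree d over R (i.e., all aᵢ ∈ R^× so that the residue form φ̄ over k is nondegenerate). Then φ is isotropic over K if and only if φ̄ = ⟨ā₁,...,āₙ⟩ is isotropic over k. -/
def IsotropicDiag (K : Type*) [Field K] (d : ℕ) {ι : Type*} [Fintype ι] (a : ι → K) : Prop :=
  ∃ x : ι → K, x ≠ 0 ∧ ∑ i, a i * x i ^ d = 0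

/-!
Both directions pass through a zero over `R` with a unit coordinate. Over a valuation ring, any
nonzero zero over `K` can be rescaled by its coordinate of maximal valuation to such a zero, which
reduces to a nontrivial zero of the residue form. Conversely, lift a residue zero `x` with
`x j ≠ 0` arbitrarily to `R`; the error can be absorbed into the `j`-th coordinate by extracting a
`d`-th root, which Hensel's lemma provides because `X ^ d - c` has a simple root modulo `𝔪` when
`d` is invertible in `k`.
-/

open IsLocalRing Polynomial

def HasPrimitiveZeroDiag (R : Type*) [CommRing R] (d : ℕ) {ι : Type*} [Fintype ι] (a : ι → R) :
    Prop :=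
  ∃ y : ι → R, (∃ j, IsUnit (y j)) ∧ ∑ i, a i * y i ^ d = 0

theorem HasPrimitiveZeroDiag.isotropicDiag_map {R F : Type*} [CommRing R] [Field F] {d : ℕ}
    {ι : Type*} [Fintype ι] {a : ι → R} (f : R →+* F) (h : HasPrimitiveZeroDiag R d a) :
    IsotropicDiag F d (fun i => f (a i)) := by
  obtain ⟨y, ⟨j, hj⟩, hy⟩ := h
  refine ⟨fun i => f (y i), fun h0 => (hj.map f).ne_zero (congrFun h0 j), ?_⟩
  simp only [← map_pow, ← map_mul, ← map_sum, hy, map_zero]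

theorem ValuationRing.exists_forall_algebraMap_eq_div (R : Type*) {K : Type*} [CommRing R]
    [IsDomain R] [ValuationRing R] [Field K] [Algebra R K] [IsFractionRing R K] {ι : Type*}
    [Finite ι] {x : ι → K} (hx : x ≠ 0) :
    ∃ j, x j ≠ 0 ∧ ∀ i, ∃ r : R, algebraMap R K r = x i / x j := by
  obtain ⟨i₀, -⟩ := Function.ne_iff.mp hx
  have : Nonempty ι := ⟨i₀⟩
  let v := ValuationRing.valuation R K
  obtain ⟨j, hj⟩ := Finite.exists_max fun i => v (x i)
  have hxj : x j ≠ 0 := fun h0 =>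
    hx (funext fun i => v.zero_iff.mp (le_zero_iff.mp (by simpa [h0] using hj i)))
  refine ⟨j, hxj, fun i => (ValuationRing.mem_integer_iff R K _).mp ?_⟩
  rw [Valuation.mem_integer_iff, map_div₀]
  exact div_le_one_of_le₀ (hj i) zero_le

theorem ValuationRing.hasPrimitiveZeroDiag_of_isotropicDiag (R : Type*) {K : Type*} [CommRing R]
    [IsDomain R] [ValuationRing R] [Field K] [Algebra R K] [IsFractionRing R K] {d : ℕ}
    {ι : Type*} [Fintype ι] {a : ι → R}
    (h : IsotropicDiag K d (fun i => algebraMap R K (a i))) : HasPrimitiveZeroDiag R d a := by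
  obtain ⟨x, hx, hsum⟩ := h
  obtain ⟨j, hxj, hr⟩ := exists_forall_algebraMap_eq_div R hx
  choose y hy using hr
  refine ⟨y, ⟨j, ?_⟩, IsFractionRing.injective R K ?_⟩
  · have hyj : y j = 1 := IsFractionRing.injective R K (by rw [hy, div_self hxj, map_one])
    simp [hyj]
  · calc algebraMap R K (∑ i, a i * y i ^ d)
        = (∑ i, algebraMap R K (a i) * x i ^ d) / x j ^ d := by
          simp only [map_sum, map_mul, map_pow, hy, div_pow, Finset.sum_div, mul_div_assoc]
      _ = algebraMap R K 0 := by rw [hsum, zero_div, map_zero]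

theorem HenselianLocalRing.exists_pow_eq_of_residue {R : Type*} [CommRing R]
    [HenselianLocalRing R] {d : ℕ} (hd : (d : ResidueField R) ≠ 0) {c : R} {t₀ : ResidueField R}
    (ht₀ : t₀ ≠ 0) (h : t₀ ^ d = residue R c) : ∃ t : R, t ^ d = c ∧ residue R t = t₀ := by
  have hroot : aeval t₀ (X ^ d - C c) = 0 := by simp [h]
  have hsimple : aeval t₀ (derivative (X ^ d - C c)) ≠ 0 := by
    simpa [derivative_X_pow, hd] using fun h0 => absurd h0 ht₀
  have hensel := ((HenselianLocalRing.TFAE R).out 0 1).mp ‹_›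
  obtain ⟨t, ht, hres⟩ :=
    hensel _ (monic_X_pow_sub_C c (by rintro rfl; simp at hd)) t₀ hroot hsimple
  exact ⟨t, by simpa [sub_eq_zero] using ht, hres⟩

theorem HenselianLocalRing.hasPrimitiveZeroDiag_of_isotropicDiag_residue {R : Type*} [CommRing R]
    [HenselianLocalRing R] {d : ℕ} (hd : (d : ResidueField R) ≠ 0) {ι : Type*} [Fintype ι]
    {a : ι → R} (ha : ∀ i, IsUnit (a i))
    (h : IsotropicDiag (ResidueField R) d (fun i => residue R (a i))) :
    HasPrimitiveZeroDiag R d a := by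
  classical
  obtain ⟨x, hx, hsum⟩ := h
  obtain ⟨j, hxj⟩ := Function.ne_iff.mp hx
  choose y₀ hy₀ using fun i => residue_surjective (R := R) (x i)
  set S := ∑ i, a i * y₀ i ^ d
  have hS : residue R S = 0 := by simp only [S, map_sum, map_mul, map_pow, hy₀, hsum]
  -- the new `j`-th coordinate `t` satisfies `a j * t ^ d = a j * y₀ j ^ d - S`
  obtain ⟨t, ht, hres⟩ := exists_pow_eq_of_residue hd (c := y₀ j ^ d - ↑(ha j).unit⁻¹ * S) hxj
    (by simp [hS, hy₀])
  refine ⟨Function.update y₀ j t, ⟨j, ?_⟩, ?_⟩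
  · rw [Function.update_self, ← residue_ne_zero_iff_isUnit, hres]
    exact hxj
  · calc ∑ i, a i * Function.update y₀ j t i ^ d = a j * t ^ d - a j * y₀ j ^ d + S := by
          rw [← Finset.add_sum_erase _ _ (Finset.mem_univ j), Function.update_self,
            Finset.sum_congr rfl fun i hi => by
              rw [Function.update_of_ne (Finset.ne_of_mem_erase hi)],
            Finset.sum_erase_eq_sub (Finset.mem_univ j)]
          ring
      _ = 0 := by rw [ht, mul_sub, ← mul_assoc, (ha j).mul_val_inv]; ring

/-- **Let `(K,v)` be a Henselian valued field** (formalized by its valuation ring `R`, a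
Henselian local valuation ring with fraction field `K = Frac R`) **with residue field `k` of
characteristic not dividing `d!`.  A diagonal unit form `φ = ⟨a₁,…,aₙ⟩` of degree `d` over `R`
(all `aᵢ ∈ R^×`) is isotropic over `K` if and only if the residue form `φ̄ = ⟨ā₁,…,āₙ⟩` is
isotropic over `k`.** -/
theorem diag_unit_form_isotropic_iff_residue
    (R : Type*) [CommRing R] [IsDomain R] [ValuationRing R] [HenselianLocalRing R]
    (d : ℕ) (hd : 1 ≤ d) (hchar : (d.factorial : IsLocalRing.ResidueField R) ≠ 0)
    (n : ℕ) (a : Fin n → R) (ha : ∀ i, IsUnit (a i)) :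
    IsotropicDiag (FractionRing R) d (fun i => algebraMap R (FractionRing R) (a i)) ↔
      IsotropicDiag (IsLocalRing.ResidueField R) d (fun i => IsLocalRing.residue R (a i)) := by
  have hd' : (d : ResidueField R) ≠ 0 := by
    obtain ⟨m, hm⟩ := Nat.dvd_factorial hd le_rfl
    exact fun h0 => hchar (by rw [hm, Nat.cast_mul, h0, zero_mul])
  exact ⟨fun h => (ValuationRing.hasPrimitiveZeroDiag_of_isotropicDiag R h).isotropicDiag_map _,
    fun h => (HenselianLocalRing.hasPrimitiveZeroDiag_of_isotropicDiag_residue hd' ha h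
      ).isotropicDiag_map _⟩
end

section
/- Let (K,v) be a Henselian valued field with value group Γ and residue field k of characteristic not dividing d!. Then u_diag(d,K) = |Γ/dΓ| · u_diag(d,k), with the convention that the equality also holds when the values are infinite. -/
noncomputable def uDiag (d : ℕ) (K : Type*) [Field K] : ℕ∞ :=
  ⨆ (n : ℕ) (_ : ∃ a : Fin n → K, (∀ i, a i ≠ 0) ∧ ¬ IsotropicDiag K d a), (n : ℕ∞)

theorem ENat.mul_le_of_forall_natCast_le {a b c : ℕ∞}
    (h : ∀ r : ℕ, (r : ℕ∞) ≤ a → r * b ≤ c) : a * b ≤ c := by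
  have ha : a = ⨆ (r : ℕ) (_ : (r : ℕ∞) ≤ a), (r : ℕ∞) :=
    le_antisymm (ENat.forall_natCast_le_iff_le.mp fun n hn => le_iSup₂_of_le n hn le_rfl)
      (iSup₂_le fun _ hr => hr)
  rw [ha]
  simp only [ENat.iSup_mul]
  exact iSup₂_le h

theorem Finset.natCast_card_le_enatCard {α : Type*} (s : Finset α) :
    (s.card : ℕ∞) ≤ ENat.card α := by
  rw [← Set.encard_coe_eq_coe_finsetCard, ← Set.encard_univ]
  exact Set.encard_le_encard (Set.subset_univ _)

theorem ENat.nonempty_fin_embedding_of_le_card {α : Type*} {r : ℕ}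
    (h : (r : ℕ∞) ≤ ENat.card α) : Nonempty (Fin r ↪ α) := by
  rw [ENat.card, Cardinal.natCast_le_toENat, ← Cardinal.lift_mk_fin,
    ← Cardinal.lift_uzero (Cardinal.mk α)] at h
  exact Cardinal.lift_mk_le'.mp h

section DiagonalForm

variable {F : Type*} [Field F] {d : ℕ} {ι ι' : Type*} [Fintype ι] [Fintype ι']

theorem IsotropicDiag.of_comp_embedding (hd : d ≠ 0) {a : ι → F} (e : ι' ↪ ι)
    (h : IsotropicDiag F d (a ∘ e)) : IsotropicDiag F d a := by
  obtain ⟨x, hx, hsum⟩ := h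
  obtain ⟨i, hi⟩ := Function.ne_iff.mp hx
  refine ⟨Function.extend e x 0, Function.ne_iff.mpr ⟨e i, ?_⟩, ?_⟩
  · rwa [e.injective.extend_apply]
  · rw [← hsum]
    refine (Fintype.sum_of_injective e e.injective _ _ (fun j hj => ?_) fun i => ?_).symm
    · rw [Function.extend_apply' _ _ _ (by simpa using hj), Pi.zero_apply, zero_pow hd,
        mul_zero]
    · rw [e.injective.extend_apply, Function.comp_apply]

theorem IsotropicDiag.mul_mul_pow {a : ι → F} (h : IsotropicDiag F d a) (b : F) {c : ι → F}
    (hc : ∀ i, c i ≠ 0) : IsotropicDiag F d (fun i => b * a i * c i ^ d) := by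
  obtain ⟨x, hx, hsum⟩ := h
  obtain ⟨i, hi⟩ := Function.ne_iff.mp hx
  refine ⟨fun i => x i / c i, Function.ne_iff.mpr ⟨i, div_ne_zero hi (hc i)⟩, ?_⟩
  calc ∑ i, b * a i * c i ^ d * (x i / c i) ^ d = b * ∑ i, a i * x i ^ d := by
        rw [Finset.mul_sum]
        refine Finset.sum_congr rfl fun i _ => ?_
        rw [div_pow, mul_assoc, mul_div_cancel₀ _ (pow_ne_zero d (hc i)), mul_assoc]
    _ = 0 := by rw [hsum, mul_zero]

theorem card_le_uDiag (hd : d ≠ 0) (a : ι → F) (ha : ∀ i, a i ≠ 0)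
    (hani : ¬ IsotropicDiag F d a) : (Fintype.card ι : ℕ∞) ≤ uDiag d F := by
  classical
  let e := (Fintype.equivFin ι).symm
  exact le_iSup₂_of_le (Fintype.card ι)
    ⟨a ∘ e, fun i => ha (e i), fun h => hani (h.of_comp_embedding hd e.toEmbedding)⟩ le_rfl

end DiagonalForm

open Polynomial IsLocalRing in
theorem HenselianLocalRing.exists_pow_eq_of_residue_eq {R : Type*} [CommRing R]
    [HenselianLocalRing R] {d : ℕ} (hd : (d : ResidueField R) ≠ 0) {c y : R} (hy : IsUnit y)
    (h : residue R c = residue R y ^ d) : ∃ a : R, a ^ d = c ∧ residue R a = residue R y := by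
  have hd₀ : d ≠ 0 := by rintro rfl; exact hd Nat.cast_zero
  have hdR : IsUnit (d : R) := (residue_ne_zero_iff_isUnit _).mp (by rwa [map_natCast])
  obtain ⟨a, ha, hay⟩ := HenselianLocalRing.is_henselian (X ^ d - C c)
    (monic_X_pow_sub_C c hd₀) y (by rw [← residue_eq_zero_iff]; simp [h])
    (by simpa [derivative_X_pow] using hdR.mul (hy.pow (d - 1)))
  refine ⟨a, by simpa [sub_eq_zero] using ha, ?_⟩
  rwa [← residue_eq_zero_iff, map_sub, sub_eq_zero] at hay

section Henselian

open IsLocalRing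

variable {R K : Type*} [CommRing R] [HenselianLocalRing R] [Field K] [Algebra R K]
  [FaithfulSMul R K] {d : ℕ} {ι : Type*} [Fintype ι]

theorem isotropicDiag_of_residue (hd : (d : ResidueField R) ≠ 0) (u : ι → Rˣ)
    (h : IsotropicDiag (ResidueField R) d fun i => residue R (u i : R)) :
    IsotropicDiag K d fun i => algebraMap R K (u i) := by
  classical
  obtain ⟨y, hy, hsum⟩ := h
  obtain ⟨j, hj : y j ≠ 0⟩ := Function.ne_iff.mp hy
  choose Y hY using fun i => residue_surjective (y i)
  set T := ∑ i, (u i : R) * Y i ^ d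
  have hT : residue R T = 0 := by simpa [T, hY] using hsum
  have hYj : IsUnit (Y j) := (residue_ne_zero_iff_isUnit _).mp (by rwa [hY])
  obtain ⟨a, ha, hay⟩ := HenselianLocalRing.exists_pow_eq_of_residue_eq hd hYj
    (c := Y j ^ d - ↑(u j)⁻¹ * T) (by simp [hT])
  have ha₀ : a ≠ 0 := by rintro rfl; exact hj (by rw [← hY, ← hay, map_zero])
  have hsplit (Z : ι → R) :
      ∑ i, (u i : R) * Z i ^ d = u j * Z j ^ d + ∑ i ∈ Finset.univ.erase j, u i * Z i ^ d :=
    (Finset.add_sum_erase _ _ (Finset.mem_univ j)).symm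
  refine ⟨fun i => algebraMap R K (Function.update Y j a i), Function.ne_iff.mpr ⟨j, ?_⟩, ?_⟩
  · simpa using ha₀
  have hsum' : ∑ i, (u i : R) * Function.update Y j a i ^ d = 0 := by
    rw [hsplit, Function.update_self, ha, Finset.sum_congr rfl fun i hi => by
      rw [Function.update_of_ne (Finset.ne_of_mem_erase hi)]]
    have hT' : T = u j * Y j ^ d + ∑ i ∈ Finset.univ.erase j, u i * Y i ^ d := hsplit Y
    linear_combination (-T) * (u j).mul_inv - hT'
  simpa [← map_pow, ← map_mul, ← map_sum] using hsum'

end Henselian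

namespace ValuationRing

variable (R K : Type*) [CommRing R] [IsDomain R] [ValuationRing R] [Field K] [Algebra R K]
  [IsFractionRing R K]

open IsLocalRing

local notation "v" => ValuationRing.valuation R K

theorem integers : (valuation R K).Integers R where
  hom_inj := IsFractionRing.injective R K
  map_le_one r := ((mem_integer_iff R K _).mpr ⟨r, rfl⟩)
  exists_of_le_one _ hx := (mem_integer_iff R K _).mp hx

variable {R K}

theorem valuation_surjective : Function.Surjective (valuation R K) :=
  Quotient.mk''_surjective

theorem residue_eq_zero_iff_valuation_lt_one (r : R) :
    residue R r = 0 ↔ v (algebraMap R K r) < 1 := by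
  rw [residue_eq_zero_iff, mem_maximalIdeal, mem_nonunits_iff,
    (integers R K).isUnit_iff_valuation_eq_one, lt_iff_le_and_ne]
  exact ⟨fun h => ⟨(integers R K).map_le_one r, h⟩, And.right⟩

theorem exists_unit_of_valuation_eq_one {x : K} (hx : v x = 1) :
    ∃ u : Rˣ, algebraMap R K u = x := by
  obtain ⟨r, rfl⟩ := (integers R K).exists_of_le_one hx.le
  exact ⟨((integers R K).isUnit_of_one' hx).unit, rfl⟩

variable (R K) in
noncomputable def valueClass (d : ℕ) :
    Kˣ →* (ValueGroup R K)ˣ ⧸ (powMonoidHom d : (ValueGroup R K)ˣ →* (ValueGroup R K)ˣ).range :=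
  (QuotientGroup.mk' _).comp (Units.map (valuation R K : K →* ValueGroup R K))

variable {d : ℕ}

theorem units_map_valuation_surjective :
    Function.Surjective (Units.map (valuation R K : K →* ValueGroup R K)) := fun γ => by
  obtain ⟨x, hx⟩ := valuation_surjective (γ : ValueGroup R K)
  have hx0 : x ≠ 0 := by rintro rfl; exact γ.ne_zero (by rw [← hx, map_zero])
  exact ⟨Units.mk0 x hx0, Units.ext hx⟩

theorem valueClass_surjective : Function.Surjective (valueClass R K d) :=
  (QuotientGroup.mk'_surjective _).comp units_map_valuation_surjective

theorem valueClass_eq_iff {a b : Kˣ} :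
    valueClass R K d a = valueClass R K d b ↔ ∃ c : Kˣ, v a = v (b * c ^ d) := by
  simp only [valueClass, MonoidHom.comp_apply, QuotientGroup.mk'_apply, QuotientGroup.eq,
    MonoidHom.mem_range, powMonoidHom_apply]
  set φ : Kˣ →* (ValueGroup R K)ˣ := Units.map (valuation R K : K →* ValueGroup R K)
  have hφ (c : Kˣ) : φ a = φ (b * c ^ d) ↔ v a = v (b * c ^ d) :=
    Units.ext_iff.trans (by simp [φ])
  constructor
  · rintro ⟨γ, hγ⟩
    obtain ⟨c, hc⟩ := units_map_valuation_surjective (R := R) γ⁻¹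
    refine ⟨c, (hφ c).mp ?_⟩
    rw [map_mul, map_pow, hc, inv_pow, hγ]
    group
  · rintro ⟨c, hc⟩
    refine ⟨(φ c)⁻¹, ?_⟩
    rw [(hφ c).mpr hc, map_mul, map_pow]
    group

theorem valuation_mul_pow_ne_of_valueClass_ne (hd : d ≠ 0) {b b' : Kˣ}
    (h : valueClass R K d b ≠ valueClass R K d b') (x : K) {x' : K} (hx' : x' ≠ 0) :
    v (b * x ^ d) ≠ v (b' * x' ^ d) := by
  intro heq
  rcases eq_or_ne x 0 with rfl | hx
  · rw [zero_pow hd, mul_zero, map_zero, eq_comm, Valuation.zero_iff] at heq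
    exact mul_ne_zero b'.ne_zero (pow_ne_zero d hx') heq
  refine h (valueClass_eq_iff.mpr ⟨Units.mk0 (x' / x) (div_ne_zero hx' hx), ?_⟩)
  calc v b = v (b * x ^ d / x ^ d) := by rw [mul_div_cancel_right₀ _ (pow_ne_zero d hx)]
    _ = v (b' * x' ^ d / x ^ d) := by rw [map_div₀, map_div₀, heq]
    _ = v (b' * (x' / x) ^ d) := by rw [div_pow, mul_div_assoc]

theorem isotropicDiag_residue_of_valuation_sum_lt_one {ι : Type*} [Fintype ι] (u : ι → Rˣ)
    (w : ι → K) (hw : ∀ i, v (w i) ≤ 1) {i₀ : ι} (hw₀ : v (w i₀) = 1)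
    (hlt : v (∑ i, algebraMap R K (u i) * w i ^ d) < 1) :
    IsotropicDiag (ResidueField R) d fun i => residue R (u i : R) := by
  choose W hW using fun i => (integers R K).exists_of_le_one (hw i)
  refine ⟨fun i => residue R (W i), Function.ne_iff.mpr ⟨i₀, ?_⟩, ?_⟩
  · exact (residue_ne_zero_iff_isUnit _).mpr
      ((integers R K).isUnit_of_one' (by rw [hW, hw₀]))
  · have := (residue_eq_zero_iff_valuation_lt_one (K := K) (∑ i, (u i : R) * W i ^ d)).mpr
      (by simpa [hW] using hlt)
    simpa using this

theorem not_isotropicDiag_of_valueClass_injective (hd : d ≠ 0) {J ι : Type*} [Fintype J]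
    [Fintype ι] (b : J → Kˣ) (hb : Function.Injective (valueClass R K d ∘ b)) (u : J → ι → Rˣ)
    (hu : ∀ j, ¬ IsotropicDiag (ResidueField R) d fun i => residue R (u j i : R)) :
    ¬ IsotropicDiag K d fun p : J × ι => (b p.1 : K) * algebraMap R K (u p.1 p.2) := by
  classical
  rintro ⟨x, hx, hsum⟩
  obtain ⟨p₁, hp₁ : x p₁ ≠ 0⟩ := Function.ne_iff.mp hx
  obtain ⟨⟨j₀, i₀⟩, -, hmax⟩ :=
    Finset.exists_max_image Finset.univ (fun p => v (b p.1 * x p ^ d)) ⟨p₁, Finset.mem_univ _⟩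
  set t := x (j₀, i₀)
  have ht : t ≠ 0 := by
    intro h0
    have := hmax p₁ (Finset.mem_univ _)
    rw [h0, zero_pow hd, mul_zero, map_zero, le_zero_iff, Valuation.zero_iff] at this
    exact mul_ne_zero (b _).ne_zero (pow_ne_zero d hp₁) this
  set D : K := b j₀ * t ^ d
  have hD : D ≠ 0 := mul_ne_zero (b j₀).ne_zero (pow_ne_zero d ht)
  have hvD : 0 < v D := (Valuation.pos_iff _).mpr hD
  have hterm_lt (j : J) (hj : j ≠ j₀) (i : ι) :
      v ((b j : K) * algebraMap R K (u j i) * x (j, i) ^ d) < v D := by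
    rw [mul_right_comm, map_mul _ _ (algebraMap R K _), (integers R K).valuation_unit, mul_one]
    exact (hmax (j, i) (Finset.mem_univ _)).lt_of_ne
      (valuation_mul_pow_ne_of_valueClass_ne hd (hb.ne hj) _ ht)
  have hblock : ∑ i, algebraMap R K (u j₀ i) * (x (j₀, i) / t) ^ d =
      -(∑ j ∈ Finset.univ.erase j₀, ∑ i, (b j : K) * algebraMap R K (u j i) * x (j, i) ^ d) /
        D := by
    rw [Fintype.sum_prod_type, ← Finset.add_sum_erase _ _ (Finset.mem_univ j₀)] at hsum
    rw [eq_div_iff hD, Finset.sum_mul, ← eq_neg_of_add_eq_zero_left hsum]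
    refine Finset.sum_congr rfl fun i _ => ?_
    simp only [D]
    rw [div_pow]
    field_simp
  apply hu j₀
  refine isotropicDiag_residue_of_valuation_sum_lt_one (u j₀) (fun i => x (j₀, i) / t)
    (i₀ := i₀) (fun i => ?_) (by rw [div_self ht, map_one]) ?_
  · have h : v (b j₀ : K) * v (x (j₀, i)) ^ d ≤ v (b j₀ : K) * v t ^ d := by
      simpa [D] using hmax (j₀, i) (Finset.mem_univ _)
    rw [map_div₀, div_le_one₀ ((Valuation.pos_iff _).mpr ht)]
    exact le_of_pow_le_pow_left₀ hd zero_le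
      (le_of_mul_le_mul_left h ((Valuation.pos_iff _).mpr (b j₀).ne_zero))
  · rw [hblock, map_div₀, Valuation.map_neg, div_lt_one₀ hvD]
    exact Valuation.map_sum_lt _ hvD.ne' fun j hj =>
      Valuation.map_sum_lt _ hvD.ne' fun i _ => hterm_lt j (Finset.ne_of_mem_erase hj) i

theorem card_le_uDiag_residueField_of_valueClass_eq [HenselianLocalRing R]
    (hd : (d : ResidueField R) ≠ 0) {ι : Type*} [Fintype ι] (b : Kˣ) (a : ι → Kˣ)
    (ha : ∀ i, valueClass R K d (a i) = valueClass R K d b)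
    (hani : ¬ IsotropicDiag K d fun i => (a i : K)) :
    (Fintype.card ι : ℕ∞) ≤ uDiag d (ResidueField R) := by
  choose c hc using fun i => valueClass_eq_iff.mp (ha i)
  have hv (i : ι) : v ((a i : K) / (b * c i ^ d)) = 1 := by
    rw [map_div₀, hc, div_self ((Valuation.ne_zero_iff _).mpr (b * c i ^ d).ne_zero)]
  choose u hu using fun i => exists_unit_of_valuation_eq_one (hv i)
  refine card_le_uDiag (by rintro rfl; exact hd Nat.cast_zero) _
    (fun i => (residue_ne_zero_iff_isUnit _).mpr (u i).isUnit) fun hiso => hani ?_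
  convert (isotropicDiag_of_residue (K := K) hd u hiso).mul_mul_pow (b : K)
    (fun i => (c i).ne_zero) using 2 with i
  rw [hu, mul_div_assoc', mul_div_mul_left _ _ b.ne_zero,
    div_mul_cancel₀ _ (pow_ne_zero d (c i).ne_zero)]

theorem uDiag_le_card_mul_uDiag_residueField [HenselianLocalRing R]
    (hd : (d : ResidueField R) ≠ 0) :
    uDiag d K ≤ ENat.card ((ValueGroup R K)ˣ ⧸
      (powMonoidHom d : (ValueGroup R K)ˣ →* (ValueGroup R K)ˣ).range) *
        uDiag d (ResidueField R) := by
  classical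
  have hd₀ : d ≠ 0 := by rintro rfl; exact hd Nat.cast_zero
  refine iSup₂_le fun n ⟨a, ha, hani⟩ => ?_
  let f (i : Fin n) := valueClass R K d (Units.mk0 (a i) (ha i))
  calc (n : ℕ∞) = ∑ q ∈ Finset.univ.image f, ((Finset.univ.filter (f · = q)).card : ℕ∞) := by
        rw [← Nat.cast_sum, ← Finset.card_eq_sum_card_image, Finset.card_univ, Fintype.card_fin]
    _ ≤ (Finset.univ.image f).card • uDiag d (ResidueField R) :=
        Finset.sum_le_card_nsmul _ _ _ fun q _ => by
          obtain ⟨b, rfl⟩ := valueClass_surjective q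
          let e := Function.Embedding.subtype fun i => f i = valueClass R K d b
          rw [← Fintype.card_subtype]
          exact card_le_uDiag_residueField_of_valueClass_eq hd b (fun i => Units.mk0 _ (ha (e i)))
            (fun i => i.2) fun h => hani (h.of_comp_embedding hd₀ e)
    _ ≤ _ := by
        rw [nsmul_eq_mul]
        gcongr
        exact Finset.natCast_card_le_enatCard _

theorem card_mul_uDiag_residueField_le_uDiag (hd : d ≠ 0) :
    ENat.card ((ValueGroup R K)ˣ ⧸
      (powMonoidHom d : (ValueGroup R K)ˣ →* (ValueGroup R K)ˣ).range) *
        uDiag d (ResidueField R) ≤ uDiag d K := by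
  conv_lhs => unfold uDiag; simp only [ENat.mul_iSup]
  refine iSup₂_le fun m ⟨w, hw, hani⟩ => ENat.mul_le_of_forall_natCast_le fun r hr => ?_
  obtain ⟨G⟩ := ENat.nonempty_fin_embedding_of_le_card hr
  choose b hb using fun j => valueClass_surjective (R := R) (K := K) (G j)
  have hlift (i : Fin m) : ∃ U : Rˣ, residue R U = w i := by
    obtain ⟨r, hr⟩ := residue_surjective (w i)
    exact ⟨((residue_ne_zero_iff_isUnit r).mp (hr ▸ hw i)).unit, hr⟩
  choose U hU using hlift
  have hinj : Function.Injective (valueClass R K d ∘ b) := by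
    simpa only [Function.comp_def, hb] using G.injective
  have := card_le_uDiag hd (fun p : Fin r × Fin m => (b p.1 : K) * algebraMap R K (U p.2))
    (fun p => mul_ne_zero (b p.1).ne_zero (by simp))
    (not_isotropicDiag_of_valueClass_injective hd b hinj (fun _ => U) fun _ => by simpa [hU])
  simpa using this

end ValuationRing

/-- **Let `(K,v)` be a Henselian valued field** (given by its valuation ring `R`, Henselian,
with `K = Frac R`) **with value group `Γ` and residue field `k` of characteristic not dividing
`d!`.  Then `u_diag(d,K) = |Γ/dΓ| · u_diag(d,k)`, the equality being in `ℕ∞` so that it also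
holds when the values are infinite.**  Here the value group `Γ` (written multiplicatively) is
the unit group of `ValuationRing.ValueGroup R K`, and `dΓ` is its subgroup of `d`-th powers. -/
theorem uDiag_henselian (R : Type*) [CommRing R] [IsDomain R] [ValuationRing R]
    [HenselianLocalRing R] (d : ℕ) (hd : 1 ≤ d)
    (hchar : (d.factorial : IsLocalRing.ResidueField R) ≠ 0) :
    uDiag d (FractionRing R) =
      ENat.card ((ValuationRing.ValueGroup R (FractionRing R))ˣ ⧸
          (powMonoidHom d : (ValuationRing.ValueGroup R (FractionRing R))ˣ →*
            (ValuationRing.ValueGroup R (FractionRing R))ˣ).range) *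
        uDiag d (IsLocalRing.ResidueField R) := by
  have hd' : (d : IsLocalRing.ResidueField R) ≠ 0 := fun h => hchar <| by
    obtain ⟨m, hm⟩ := Nat.dvd_factorial hd le_rfl
    rw [hm, Nat.cast_mul, h, zero_mul]
  exact le_antisymm (ValuationRing.uDiag_le_card_mul_uDiag_residueField hd')
    (ValuationRing.card_mul_uDiag_residueField_le_uDiag (by omega))
end

section
/- Let (K,v) be a complete discretely valued field with residue field k of characteristic not dividing d!. If every diagonal form of degree d and dimension n+1 over k is isotropic, then every diagonal form of degree d and dimension dn+1 over K is isotropic. -/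
/-! Write each coefficient as `u • ϖ ^ z` with `u` a unit and `ϖ` a uniformizer. Among `d n + 1`
exponents some `n + 1` are congruent mod `d`, so after rescaling the variables by powers of `ϖ` the
corresponding subform is a multiple of a form with unit coefficients. Its reduction is isotropic
over the residue field, and since `d` is invertible there, a nonzero coordinate of a residual zero
is a simple root in that variable; Hensel's lemma lifts the zero. -/

open IsLocalRing Polynomial

namespace IsotropicDiag

variable {K : Type*} [Field K] {d : ℕ} {ι κ : Type*} [Fintype ι] [Fintype κ]

theorem mul_pow {a : ι → K} (h : IsotropicDiag K d a) (c : K) {t : ι → K}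
    (ht : ∀ i, t i ≠ 0) : IsotropicDiag K d fun i => c * a i * t i ^ d := by
  obtain ⟨x, hx, hsum⟩ := h
  refine ⟨fun i => x i / t i, fun h0 => hx (funext fun i => ?_), ?_⟩
  · simpa [ht i] using congrFun h0 i
  · calc ∑ i, c * a i * t i ^ d * (x i / t i) ^ d = c * ∑ i, a i * x i ^ d := by
          rw [Finset.mul_sum]
          refine Finset.sum_congr rfl fun i _ => ?_
          rw [div_pow]
          field_simp [pow_ne_zero d (ht i)]
      _ = 0 := by rw [hsum, mul_zero]

theorem of_comp_embedding_s7 (hd : d ≠ 0) {a : κ → K} (g : ι ↪ κ)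
    (h : IsotropicDiag K d (a ∘ g)) : IsotropicDiag K d a := by
  obtain ⟨x, hx, hsum⟩ := h
  obtain ⟨i, hi⟩ := Function.ne_iff.mp hx
  refine ⟨Function.extend g x 0, Function.ne_iff.mpr ⟨g i, ?_⟩, ?_⟩
  · simpa [g.injective.extend_apply] using hi
  · rw [← hsum]
    refine (Fintype.sum_of_injective g g.injective _ _ (fun k hk => ?_) fun i => ?_).symm
    · rw [Function.extend_apply' _ _ _ (by simpa using hk), Pi.zero_apply, zero_pow hd, mul_zero]
    · rw [Function.comp_apply, g.injective.extend_apply]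

end IsotropicDiag

theorem exists_embedding_fin_eq_add_mul {κ : Type*} [Fintype κ] (z : κ → ℤ) {d n : ℕ}
    (hd : d ≠ 0) (hcard : d * n < Fintype.card κ) :
    ∃ (g : Fin (n + 1) ↪ κ) (r : ℤ) (q : Fin (n + 1) → ℤ), ∀ j, z (g j) = r + d * q j := by
  have : NeZero d := ⟨hd⟩
  obtain ⟨c, hc⟩ := Fintype.exists_lt_card_fiber_of_mul_lt_card (fun i => (z i : ZMod d))
    (n := n) (by rwa [ZMod.card])
  obtain ⟨e⟩ := Function.Embedding.nonempty_of_card_le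
    (α := Fin (n + 1)) (β := {i // (z i : ZMod d) = c}) (by simpa [Fintype.card_subtype])
  set g := e.trans (Function.Embedding.subtype _)
  have hdvd : ∀ j, (d : ℤ) ∣ z (g j) - z (g 0) := fun j =>
    (ZMod.intCast_eq_intCast_iff_dvd_sub _ _ d).mp ((e 0).2.trans (e j).2.symm)
  choose q hq using hdvd
  exact ⟨g, z (g 0), q, fun j => by rw [← hq j]; ring⟩

section Henselian

variable {A : Type*} [CommRing A] [IsLocalRing A] [HenselianRing A (maximalIdeal A)]

theorem exists_pow_eq_of_residue_eq_pow {d : ℕ} (hd : (d : ResidueField A) ≠ 0) {a : A}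
    {t₀ : ResidueField A} (ht₀ : t₀ ≠ 0) (ha : residue A a = t₀ ^ d) :
    ∃ t : A, t ^ d = a ∧ residue A t = t₀ := by
  obtain ⟨t₁, rfl⟩ := residue_surjective t₀
  have hd0 : d ≠ 0 := by rintro rfl; exact hd Nat.cast_zero
  have hroot : (X ^ d - C a).eval t₁ ∈ maximalIdeal A := by
    rw [← residue_eq_zero_iff]
    simp [ha]
  have hsimple : IsUnit (residue A ((X ^ d - C a).derivative.eval t₁)) := by
    refine isUnit_iff_ne_zero.mpr ?_
    simpa [derivative_X_pow] using And.intro hd (pow_ne_zero _ ht₀)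
  obtain ⟨t, ht, htt₁⟩ :=
    HenselianRing.is_henselian _ (monic_X_pow_sub_C a hd0) t₁ hroot hsimple
  refine ⟨t, by simpa [sub_eq_zero] using ht, ?_⟩
  rwa [← sub_eq_zero, ← map_sub, residue_eq_zero_iff]

theorem exists_lift_of_residue_sum_mul_pow_eq_zero {ι : Type*} [Fintype ι] [DecidableEq ι]
    {d : ℕ} (hd : (d : ResidueField A) ≠ 0) (u : ι → A) {i₀ : ι} (hu : IsUnit (u i₀))
    (x₀ : ι → ResidueField A) (hx₀ : x₀ i₀ ≠ 0)
    (hsum : ∑ i, residue A (u i) * x₀ i ^ d = 0) :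
    ∃ x : ι → A, (∀ i, residue A (x i) = x₀ i) ∧ ∑ i, u i * x i ^ d = 0 := by
  choose y hy using fun i => residue_surjective (x₀ i)
  set s := ∑ i ∈ Finset.univ.erase i₀, u i * y i ^ d
  -- solve `u i₀ * t ^ d = -s` for the coordinate `i₀` by Hensel's lemma
  have hs : residue A (-((hu.unit⁻¹ : Aˣ) : A) * s) = x₀ i₀ ^ d := by
    have hres : residue A s = -(residue A (u i₀) * x₀ i₀ ^ d) := by
      rw [← Finset.add_sum_erase _ _ (Finset.mem_univ i₀)] at hsum
      simp only [s, map_sum, map_mul, map_pow, hy]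
      linear_combination hsum
    have hinv : residue A ((hu.unit⁻¹ : Aˣ) : A) * residue A (u i₀) = 1 := by
      rw [← map_mul, IsUnit.val_inv_mul, map_one]
    rw [map_mul, map_neg, hres]
    linear_combination x₀ i₀ ^ d * hinv
  obtain ⟨t, ht, htx₀⟩ := exists_pow_eq_of_residue_eq_pow hd hx₀ hs
  refine ⟨Function.update y i₀ t, fun i => ?_, ?_⟩
  · rcases eq_or_ne i i₀ with rfl | hi
    · rw [Function.update_self, htx₀]
    · rw [Function.update_of_ne hi, hy]
  · rw [← Finset.add_sum_erase _ _ (Finset.mem_univ i₀), Function.update_self, ht,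
      Finset.sum_congr rfl fun i hi => by rw [Function.update_of_ne (Finset.ne_of_mem_erase hi)],
      ← mul_assoc, mul_neg, IsUnit.mul_val_inv, neg_one_mul, neg_add_cancel]

theorem IsotropicDiag.of_residue {K : Type*} [Field K] [Algebra A K] [FaithfulSMul A K]
    {ι : Type*} [Fintype ι] {d : ℕ} (hd : (d : ResidueField A) ≠ 0) {u : ι → A}
    (hu : ∀ i, IsUnit (u i)) (h : IsotropicDiag (ResidueField A) d fun i => residue A (u i)) :
    IsotropicDiag K d fun i => algebraMap A K (u i) := by
  classical
  obtain ⟨x₀, hx₀, hsum⟩ := h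
  obtain ⟨i₀, hi₀⟩ : ∃ i, x₀ i ≠ 0 := Function.ne_iff.mp hx₀
  obtain ⟨x, hx, hxsum⟩ := exists_lift_of_residue_sum_mul_pow_eq_zero hd u (hu i₀) x₀ hi₀ hsum
  refine ⟨fun i => algebraMap A K (x i), Function.ne_iff.mpr ⟨i₀, ?_⟩, ?_⟩
  · have : x i₀ ≠ 0 := fun h0 => hi₀ (by rw [← hx, h0, map_zero])
    simpa using this
  · simp only [← map_pow, ← map_mul, ← map_sum, hxsum, map_zero]

end Henselian

/-- **Let `(K,v)` be a complete discretely valued field** (formalized as the fraction field of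
a complete discrete valuation ring `A`) **with residue field `k` of characteristic not dividing
`d!`.  If every diagonal form of degree `d` and dimension `n+1` over `k` is isotropic, then
every diagonal form of degree `d` and dimension `dn+1` over `K` is isotropic.** -/
theorem springer_isotropy_step
    (A : Type*) [CommRing A] [IsDomain A] [IsDiscreteValuationRing A]
    [IsAdicComplete (IsLocalRing.maximalIdeal A) A]
    (d : ℕ) (hd : 1 ≤ d) (hchar : (d.factorial : IsLocalRing.ResidueField A) ≠ 0)
    (n : ℕ)
    (hk : ∀ a : Fin (n + 1) → IsLocalRing.ResidueField A, (∀ i, a i ≠ 0) →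
      IsotropicDiag (IsLocalRing.ResidueField A) d a) :
    ∀ b : Fin (d * n + 1) → FractionRing A, (∀ i, b i ≠ 0) →
      IsotropicDiag (FractionRing A) d b := by
  intro b hb
  have hdk : (d : ResidueField A) ≠ 0 := fun h => hchar <| by
    obtain ⟨m, hm⟩ := Nat.dvd_factorial hd le_rfl
    rw [hm, Nat.cast_mul, h, zero_mul]
  obtain ⟨π, hπ⟩ := IsDiscreteValuationRing.exists_irreducible A
  set ϖ := algebraMap A (FractionRing A) π
  have hϖ : ϖ ≠ 0 := by simpa [ϖ] using hπ.ne_zero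
  choose z u hbu using fun i =>
    IsDiscreteValuationRing.exists_units_eq_smul_zpow_of_irreducible hπ (hb i)
  obtain ⟨g, r, q, hzq⟩ := exists_embedding_fin_eq_add_mul z (d := d) (n := n) (by omega)
    (by simp)
  have hunits : IsotropicDiag (FractionRing A) d fun j => algebraMap A _ (u (g j)) :=
    .of_residue hdk (fun j => (u (g j)).isUnit)
      (hk _ fun j => ((u (g j)).isUnit.map (residue A)).ne_zero)
  have hbg : b ∘ g = fun j => ϖ ^ r * algebraMap A _ (u (g j)) * (ϖ ^ q j) ^ d := by
    funext j
    rw [Function.comp_apply, hbu, hzq, Units.smul_def, Algebra.smul_def, ← zpow_natCast,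
      ← zpow_mul, zpow_add₀ hϖ, mul_comm (d : ℤ)]
    ring
  refine .of_comp_embedding (by omega) g ?_
  rw [hbg]
  exact hunits.mul_pow _ fun j => zpow_ne_zero _ hϖ
end

section
/- Let q be a prime power and d ≥ 1, and set d* = gcd(d, q−1). Then u_diag(d, 𝔽_q) ≤ d*. In particular, if d is relatively prime to q−1 then every diagonal form of degree d in at least 2 variables over 𝔽_q is isotropic, i.e., u_diag(d,𝔽_q) = 1. -/
theorem exists_pow_eq_pow_gcd {G : Type*} [Group G] {g : G} {n : ℕ} (hg : g ^ n = 1) (d : ℕ) :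
    ∃ h : G, h ^ d = g ^ d.gcd n := by
  refine ⟨g ^ d.gcdA n, ?_⟩
  rw [← zpow_natCast, ← zpow_natCast g, ← zpow_mul, Nat.gcd_eq_gcd_ab, zpow_add, zpow_mul g n,
    zpow_natCast g n, hg, one_zpow, mul_one, mul_comm]

namespace FiniteField

variable {K : Type*} [Field K] [Fintype K]

theorem exists_pow_eq_pow_gcd_card_sub_one {d : ℕ} (hd : d ≠ 0) (y : K) :
    ∃ x : K, x ^ d = y ^ d.gcd (Fintype.card K - 1) ∧ (x = 0 → y = 0) := by
  by_cases hy : y = 0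
  · subst hy
    exact ⟨0, by simp [hd], fun _ => rfl⟩
  · obtain ⟨x, hx⟩ := exists_pow_eq_pow_gcd
      (Units.ext (pow_card_sub_one_eq_one y hy) : Units.mk0 y hy ^ (Fintype.card K - 1) = 1) d
    exact ⟨x, by simpa using congrArg Units.val hx, fun h => absurd h x.ne_zero⟩

theorem exists_ne_zero_eval_eq_zero {σ : Type*} [Fintype σ]
    {f : MvPolynomial σ K} (hdeg : f.totalDegree < Fintype.card σ) (h0 : f.eval 0 = 0) :
    ∃ x ≠ 0, f.eval x = 0 := by
  classical
  obtain ⟨p, _⟩ := CharP.exists K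
  have hp : p.Prime := CharP.char_is_prime K p
  have hcard : 1 < Fintype.card { x : σ → K // f.eval x = 0 } :=
    hp.one_lt.trans_le (Nat.le_of_dvd (Fintype.card_pos_iff.mpr ⟨⟨0, h0⟩⟩)
      (char_dvd_card_solutions p hdeg))
  obtain ⟨⟨x, hx⟩, hne⟩ := Fintype.exists_ne_of_one_lt_card hcard ⟨0, h0⟩
  exact ⟨x, fun h => hne (Subtype.ext h), hx⟩

end FiniteField

open MvPolynomial

section Diagonal

variable {K : Type*} [Field K] {ι : Type*} [Fintype ι]

noncomputable def diagPoly (d : ℕ) (a : ι → K) : MvPolynomial ι K :=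
  ∑ i, C (a i) * X i ^ d

theorem eval_diagPoly (d : ℕ) (a : ι → K) (x : ι → K) :
    (diagPoly d a).eval x = ∑ i, a i * x i ^ d := by
  simp [diagPoly]

theorem totalDegree_diagPoly_le (d : ℕ) (a : ι → K) : (diagPoly d a).totalDegree ≤ d :=
  totalDegree_finsetSum_le fun i _ =>
    (totalDegree_mul _ _).trans (by simp [totalDegree_X_pow])

theorem IsotropicDiag.of_pow_eq {d e : ℕ} {a : ι → K} (h : IsotropicDiag K e a)
    (hpow : ∀ y : K, ∃ x : K, x ^ d = y ^ e ∧ (x = 0 → y = 0)) : IsotropicDiag K d a := by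
  choose f hf hf0 using hpow
  obtain ⟨y, hy0, hy⟩ := h
  refine ⟨f ∘ y, fun h => hy0 (funext fun i => hf0 _ (congrFun h i)), ?_⟩
  simpa [hf] using hy

variable [Fintype K]

theorem isotropicDiag_of_lt_card {d : ℕ} (hd : d ≠ 0) (hlt : d < Fintype.card ι)
    (a : ι → K) : IsotropicDiag K d a := by
  obtain ⟨x, hx0, hx⟩ := FiniteField.exists_ne_zero_eval_eq_zero
    ((totalDegree_diagPoly_le d a).trans_lt hlt) (by rw [eval_diagPoly]; simp [hd])
  exact ⟨x, hx0, by rwa [eval_diagPoly] at hx⟩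

theorem isotropicDiag_of_gcd_lt_card {d : ℕ} (hd : d ≠ 0)
    (hlt : d.gcd (Fintype.card K - 1) < Fintype.card ι) (a : ι → K) : IsotropicDiag K d a :=
  (isotropicDiag_of_lt_card (Nat.gcd_ne_zero_left hd) hlt a).of_pow_eq
    (FiniteField.exists_pow_eq_pow_gcd_card_sub_one hd)

end Diagonal

section uDiag

variable {K : Type*} [Field K] {d : ℕ}

theorem uDiag_le_of_forall_isotropicDiag {m : ℕ}
    (h : ∀ n (a : Fin n → K), m < n → IsotropicDiag K d a) : uDiag d K ≤ m :=
  iSup₂_le fun n ⟨a, _, ha⟩ => by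
    by_contra hlt
    exact ha (h n a (by exact_mod_cast not_le.mp hlt))

theorem one_le_uDiag (hd : d ≠ 0) : 1 ≤ uDiag d K := by
  refine le_iSup₂_of_le (f := fun n (_ : ∃ a : Fin n → K, _) => (n : ℕ∞)) 1
    ⟨fun _ => 1, fun _ => one_ne_zero, ?_⟩ (by simp)
  rintro ⟨x, hx0, hx⟩
  exact hx0 (funext fun i => by simpa [Fin.fin_one_eq_zero i, hd] using hx)

end uDiag

/-- **Let `𝔽_q` be a finite field with `q` elements, `d ≥ 1`, and `d* = gcd(d, q−1)`.
Then `u_diag(d, 𝔽_q) ≤ d*`.  In particular, if `d` is relatively prime to `q−1`, then every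
diagonal form of degree `d` in at least 2 variables over `𝔽_q` is isotropic and
`u_diag(d, 𝔽_q) = 1`.** -/
theorem uDiag_finite_field (F : Type*) [Field F] [Fintype F] (d : ℕ) (hd : 1 ≤ d) :
    uDiag d F ≤ (Nat.gcd d (Fintype.card F - 1) : ℕ∞) ∧
    (Nat.Coprime d (Fintype.card F - 1) →
      (∀ (n : ℕ) (a : Fin n → F), 2 ≤ n → (∀ i, a i ≠ 0) → IsotropicDiag F d a) ∧
        uDiag d F = 1) := by
  have hd0 : d ≠ 0 := Nat.one_le_iff_ne_zero.mp hd
  have hiso : ∀ n (a : Fin n → F), d.gcd (Fintype.card F - 1) < n → IsotropicDiag F d a :=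
    fun n a hn => isotropicDiag_of_gcd_lt_card hd0 (by simpa using hn) a
  refine ⟨uDiag_le_of_forall_isotropicDiag hiso, fun hcop => ?_⟩
  have hgcd : d.gcd (Fintype.card F - 1) = 1 := hcop
  refine ⟨fun n a hn _ => hiso n a (by omega), le_antisymm ?_ (one_le_uDiag hd0)⟩
  simpa [hgcd] using uDiag_le_of_forall_isotropicDiag hiso
end

section
/- Let d ≥ 3, let k be a field with char k not dividing d!, and let a₁,...,aₙ, b₁,...,bₙ ∈ k^×. The diagonal forms ⟨a₁,...,aₙ⟩ and ⟨b₁,...,bₙ⟩ of degree d are isomorphic if and only if there is a permutation π ∈ Sₙ such that bᵢ/a_{π(i)} ∈ (k^×)^d for every i. -/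
/-!
Polarization, which needs `d!` to be invertible, turns an isometry `f` between the degree-`d`
forms into an isometry between the symmetric `d`-linear forms `∑ᵢ aᵢ ∏ₜ xₜᵢ`.  Evaluating these
on `f⁻¹eₛ, f⁻¹eₛ'` and `d - 2 ≥ 1` copies of `eⱼ` gives `aⱼ (f⁻¹eₛ)ⱼ (f⁻¹eₛ')ⱼ = 0` for `s ≠ s'`,
so the vectors `f⁻¹eₛ` have pairwise disjoint supports.  Hence `f⁻¹` is a monomial matrix,
`f⁻¹eₛ = cₛ e_{π s}`, and evaluating the forms at `eₛ` gives `bₛ = a_{π s} cₛᵈ`.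
-/

/-- Two diagonal forms `⟨a₁,…,aₙ⟩` and `⟨b₁,…,bₙ⟩` of degree `d` over `k` are isomorphic:
there is a bijective linear map `f : kⁿ → kⁿ` carrying one form (equivalently, since
`char k ∤ d!`, its associated symmetric `d`-linear form) to the other. -/
def DiagEquiv {k : Type*} [Field k] (d n : ℕ) (a b : Fin n → k) : Prop :=
  ∃ f : (Fin n → k) ≃ₗ[k] (Fin n → k),
    ∀ x : Fin n → k, ∑ i, b i * (f x) i ^ d = ∑ i, a i * x i ^ d

open Finset Function

section Polarization

variable {R : Type*} [CommRing R]

lemma sum_superset_neg_one_pow_card {ι : Type*} [Fintype ι] [DecidableEq ι] (T : Finset ι) :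
    ∑ S with T ⊆ S, (-1 : R) ^ (Fintype.card ι - #S) = if T = univ then 1 else 0 := by
  have h := congrArg (Int.cast : ℤ → R) (sum_powerset_neg_one_pow_card (x := Tᶜ))
  push_cast [compl_eq_empty_iff] at h
  rw [← h]
  refine sum_nbij' compl compl ?_ ?_ (fun _ _ => compl_compl _) (fun _ _ => compl_compl _) ?_
  · intro S hS
    simpa [compl_subset_compl] using hS
  · intro V hV
    simpa [subset_compl_comm] using hV
  · intro S _
    rw [card_compl]

lemma sum_filter_surjective_eq_sum_perm {α M : Type*} [Fintype α] [DecidableEq α]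
    [AddCommMonoid M] (F : (α → α) → M) :
    ∑ g : α → α with Surjective g, F g = ∑ π : Equiv.Perm α, F π := by
  symm
  refine sum_bij (fun π _ => ⇑π) (fun π _ => by simpa using π.surjective)
    (fun _ _ _ _ h => DFunLike.coe_injective h) (fun g hg => ?_) (fun _ _ => rfl)
  simp only [mem_filter, mem_univ, true_and] at hg
  exact ⟨Equiv.ofBijective g (Finite.surjective_iff_bijective.mp hg), mem_univ _, rfl⟩

lemma sum_neg_one_pow_mul_sum_pow (d : ℕ) (s : Fin d → R) :
    ∑ S : Finset (Fin d), (-1 : R) ^ (d - #S) * (∑ t ∈ S, s t) ^ d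
      = d.factorial * ∏ t, s t := by
  have expand (S : Finset (Fin d)) :
      (∑ t ∈ S, s t) ^ d = ∑ g ∈ Fintype.piFinset fun _ : Fin d => S, ∏ m, s (g m) := by
    rw [← prod_univ_sum, prod_const, card_univ, Fintype.card_fin]
  calc ∑ S : Finset (Fin d), (-1 : R) ^ (d - #S) * (∑ t ∈ S, s t) ^ d
      = ∑ g : Fin d → Fin d, (∑ S with univ.image g ⊆ S, (-1 : R) ^ (d - #S)) *
          ∏ m, s (g m) := by
        simp_rw [expand, mul_sum, sum_mul]
        refine sum_comm' fun S g => ?_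
        simp [Fintype.mem_piFinset, image_subset_iff]
    _ = ∑ g : Fin d → Fin d with Surjective g, ∏ m, s (g m) := by
        rw [sum_filter]
        refine sum_congr rfl fun g _ => ?_
        have := sum_superset_neg_one_pow_card (R := R) (univ.image g)
        rw [Fintype.card_fin] at this
        have hsurj : univ.image g = univ ↔ Surjective g := by
          simp [eq_univ_iff_forall, Surjective]
        simp only [this, hsurj, ite_mul, one_mul, zero_mul]
    _ = ∑ π : Equiv.Perm (Fin d), ∏ t, s t := by
        rw [sum_filter_surjective_eq_sum_perm fun g => ∏ m, s (g m)]
        exact sum_congr rfl fun π _ => Equiv.prod_comp π s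
    _ = d.factorial * ∏ t, s t := by
        rw [sum_const, card_univ, Fintype.card_perm, Fintype.card_fin, nsmul_eq_mul]

end Polarization

lemma exists_perm_eq_single_of_pairwise_disjoint_support {ι M : Type*} [Finite ι]
    [DecidableEq ι] [Zero M] {v : ι → ι → M} (hv : ∀ s, v s ≠ 0)
    (hdisj : Pairwise (Disjoint on fun s => support (v s))) :
    ∃ (τ : Equiv.Perm ι) (c : ι → M), ∀ s, c s ≠ 0 ∧ v s = Pi.single (τ s) (c s) := by
  have hsupp (s : ι) : ∃ j, v s j ≠ 0 := ne_iff.mp (hv s)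
  choose τ hτ using hsupp
  have hinj : Injective τ := fun s s' h => by
    by_contra hss
    exact Set.disjoint_left.mp (hdisj hss) (hτ s) (h ▸ hτ s')
  have hbij : Bijective τ := Finite.injective_iff_bijective.mp hinj
  refine ⟨Equiv.ofBijective τ hbij, fun s => v s (τ s), fun s => ⟨hτ s, funext fun j => ?_⟩⟩
  obtain ⟨s', rfl⟩ := hbij.2 j
  rw [Equiv.ofBijective_apply]
  rcases eq_or_ne s' s with rfl | hs
  · simp
  · rw [Pi.single_eq_of_ne (hinj.ne hs)]
    by_contra h
    exact Set.disjoint_left.mp (hdisj hs) (hτ s') h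

section DiagonalForms

variable {R : Type*} [CommRing R] {ι κ : Type*} [Fintype ι] [Fintype κ]

def diagForm (d : ℕ) (a x : ι → R) : R := ∑ i, a i * x i ^ d

def diagPolar {d : ℕ} (a : ι → R) (x : Fin d → ι → R) : R := ∑ i, a i * ∏ t, x t i

lemma sum_neg_one_pow_mul_diagForm_sum (d : ℕ) (a : ι → R) (x : Fin d → ι → R) :
    ∑ S : Finset (Fin d), (-1 : R) ^ (d - #S) * diagForm d a (∑ t ∈ S, x t)
      = d.factorial * diagPolar a x := by
  simp only [diagForm, diagPolar, Finset.sum_apply, mul_sum]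
  rw [sum_comm]
  refine sum_congr rfl fun i _ => ?_
  rw [mul_left_comm, ← sum_neg_one_pow_mul_sum_pow, mul_sum]
  exact sum_congr rfl fun S _ => by ring

lemma diagPolar_comp_eq_of_diagForm_comp_eq [IsDomain R] {d : ℕ} (hchar : (d.factorial : R) ≠ 0)
    {F : Type*} [FunLike F (ι → R) (κ → R)] [AddMonoidHomClass F (ι → R) (κ → R)]
    {a : ι → R} {b : κ → R} {f : F} (hf : ∀ x, diagForm d b (f x) = diagForm d a x)
    (x : Fin d → ι → R) : diagPolar b (f ∘ x) = diagPolar a x := by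
  refine mul_left_cancel₀ hchar ?_
  rw [← sum_neg_one_pow_mul_diagForm_sum, ← sum_neg_one_pow_mul_diagForm_sum]
  simp only [Function.comp_apply, ← map_sum, hf]

lemma diagForm_single [DecidableEq ι] {d : ℕ} (hd : d ≠ 0) (a : ι → R) (i : ι) (c : R) :
    diagForm d a (Pi.single i c) = a i * c ^ d := by
  rw [diagForm, sum_eq_single i (fun j _ hj => by simp [hj, zero_pow hd]) (by simp)]
  simp

lemma diagPolar_cons_cons {m : ℕ} (a u v w : ι → R) :
    diagPolar a (Fin.cons u (Fin.cons v fun _ => w) : Fin (m + 2) → ι → R)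
      = ∑ i, a i * (u i * v i * w i ^ m) := by
  simp [diagPolar, Fin.prod_univ_succ, mul_assoc]

lemma symm_single_mul_symm_single_eq_zero [NoZeroDivisors R] [DecidableEq ι] [DecidableEq κ]
    {d : ℕ} (hd : 3 ≤ d) {a : ι → R} {b : κ → R} (e : (ι → R) ≃ₗ[R] (κ → R))
    (he : ∀ x : Fin d → ι → R, diagPolar b (e ∘ x) = diagPolar a x) {s s' : κ} (hss : s ≠ s')
    {j : ι} (ha : a j ≠ 0) : e.symm (Pi.single s 1) j * e.symm (Pi.single s' 1) j = 0 := by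
  obtain ⟨m, rfl⟩ : ∃ m, d = m + 1 + 2 := ⟨d - 3, by omega⟩
  have h := he (Fin.cons (e.symm (Pi.single s 1)) (Fin.cons (e.symm (Pi.single s' 1))
    fun _ => Pi.single j 1))
  rw [Fin.comp_cons, Fin.comp_cons] at h
  simp only [LinearEquiv.apply_symm_apply, Function.comp_def, diagPolar_cons_cons] at h
  have hL : ∀ i, (Pi.single s 1 : κ → R) i * (Pi.single s' 1 : κ → R) i = 0 := fun i => by
    rcases eq_or_ne i s with rfl | hi <;> simp [*]
  rw [sum_eq_single j (fun i _ hi => by simp [hi]) (by simp)] at h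
  simpa [hL, ha] using h.symm

end DiagonalForms

theorem DiagEquiv.exists_perm {k : Type*} [Field k] {d n : ℕ} (hd : 3 ≤ d)
    (hchar : (d.factorial : k) ≠ 0) {a b : Fin n → k} (ha : ∀ i, a i ≠ 0)
    (h : DiagEquiv d n a b) :
    ∃ π : Equiv.Perm (Fin n), ∀ i, ∃ c : k, c ≠ 0 ∧ b i = a (π i) * c ^ d := by
  obtain ⟨f, hf⟩ := h
  have hdisj : Pairwise (Disjoint on fun s => support (f.symm (Pi.single s 1))) :=
    fun s s' hss => Set.disjoint_left.mpr fun j hj hj' => hj' <|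
      (mul_eq_zero.mp (symm_single_mul_symm_single_eq_zero hd f
        (diagPolar_comp_eq_of_diagForm_comp_eq hchar hf) hss (ha j))).resolve_left hj
  obtain ⟨π, c, hc⟩ := exists_perm_eq_single_of_pairwise_disjoint_support
    (fun s => by simp) hdisj
  refine ⟨π, fun s => ⟨c s, (hc s).1, ?_⟩⟩
  calc b s = diagForm d b (f (f.symm (Pi.single s 1))) := by
        rw [f.apply_symm_apply, diagForm_single (by omega), one_pow, mul_one]
    _ = diagForm d a (f.symm (Pi.single s 1)) := hf _
    _ = a (π s) * c s ^ d := by rw [(hc s).2, diagForm_single (by omega)]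

theorem DiagEquiv.of_perm {k : Type*} [Field k] {d n : ℕ} {a b : Fin n → k}
    (π : Equiv.Perm (Fin n)) (h : ∀ i, ∃ c : k, c ≠ 0 ∧ b i = a (π i) * c ^ d) :
    DiagEquiv d n a b := by
  choose c hc hb using h
  refine ⟨(LinearEquiv.funCongrLeft k k π).trans (LinearEquiv.piCongrRight fun i =>
    LinearEquiv.smulOfNeZero k k (c i)⁻¹ (inv_ne_zero (hc i))), fun x => ?_⟩
  calc ∑ i, b i * ((c i)⁻¹ * x (π i)) ^ d = ∑ i, a (π i) * x (π i) ^ d :=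
        sum_congr rfl fun i _ => by rw [hb i, mul_pow, inv_pow]; field_simp [hc i]
    _ = ∑ i, a i * x i ^ d := Equiv.sum_comp π fun i => a i * x i ^ d

theorem diagEquiv_iff_perm_general (k : Type*) [Field k] (d n : ℕ) (hd : 3 ≤ d)
    (hchar : (d.factorial : k) ≠ 0)
    (a b : Fin n → k) (ha : ∀ i, a i ≠ 0) :
    DiagEquiv d n a b ↔
      ∃ π : Equiv.Perm (Fin n), ∀ i, ∃ c : k, c ≠ 0 ∧ b i = a (π i) * c ^ d :=
  ⟨DiagEquiv.exists_perm hd hchar ha, fun ⟨π, h⟩ => DiagEquiv.of_perm π h⟩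

/-- **Let `d ≥ 3`, `k` a field with `char k ∤ d!`, and `a₁,…,aₙ, b₁,…,bₙ ∈ k^×`.  The
diagonal forms `⟨a₁,…,aₙ⟩` and `⟨b₁,…,bₙ⟩` of degree `d` are isomorphic if and only if there
is a permutation `π ∈ Sₙ` with `bᵢ/a_{π(i)} ∈ (k^×)^d` for every `i`.** -/
theorem diagEquiv_iff_perm (k : Type*) [Field k] (d n : ℕ) (hd : 3 ≤ d)
    (hchar : (d.factorial : k) ≠ 0)
    (a b : Fin n → k) (ha : ∀ i, a i ≠ 0) (hb : ∀ i, b i ≠ 0) :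
    DiagEquiv d n a b ↔
      ∃ π : Equiv.Perm (Fin n), ∀ i, ∃ c : k, c ≠ 0 ∧ b i = a (π i) * c ^ d :=
  diagEquiv_iff_perm_general k d n hd hchar a b ha
end
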